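/- Let A ∈ ℝ^{m×m}, B ∈ ℝ^{m×1}, C ∈ ℝ^{1×m}, and let K ≥ 2 be an integer. Let α₁, …, α_K and β₁, …, β_K be real scalars with α_i < β_i, let ε₁, …, ε_K > 0 and M₁, …, M_{K−1} > 0. Suppose for each i = 1, …, K the matrices (P_i, L_i, J_i), with P_i symmetric positive definite, satisfy the ε_i-KYP conditions for (A − α_i BC, B, C, 1/(β_i − α_i)): P_i(A − α_i BC) + (A − α_i BC)ᵀP_i = −L_iᵀL_i − (ε_i/2)P_i, P_i B = Cᵀ − L_iᵀJ_i, J_iᵀJ_i = 2/(β_i − α_i). Let n : ℝ × ℝ → ℝ be continuous and suppose: (1/(β₁−α₁))·(n(t,y) − α₁y)·(β₁y − n(t,y)) > −M₁ for all t, y; for each i = 1, …, K−2 there exists η_i > 0 such that |y| < 2√((M_i/ε_i)·C P_i⁻¹ Cᵀ) + η_i implies (1/(β_{i+1}−α_{i+1}))·(n(t,y) − α_{i+1}y)·(β_{i+1}y − n(t,y)) > −M_{i+1}; and there exists η_{K−1} > 0 such that |y| < 2√((M_{K−1}/ε_{K−1})·C P_{K−1}⁻¹ Cᵀ) + η_{K−1}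 implies (n(t,y) − α_K y)·(β_K y − n(t,y)) ≥ 0. Then every differentiable solution x : [0, ∞) → ℝ^m of x'(t) = A x(t) − B n(t, C x(t)) satisfies x(t) → 0 as t → ∞. -/

import Mathlib

/-!
Each KYP certificate `Pᵢ` gives a quadratic Lyapunov function `V = xᵀ Pᵢ x` whose derivative
along trajectories is at most `-(εᵢ/2) V - 2 σᵢ`, where `σᵢ` is the sector quantity
`(n - αᵢ y)(βᵢ y - n) / (βᵢ - αᵢ)`. While `σᵢ > -Mᵢ`, Grönwall's inequality makes `V`
eventually smaller than `4 Mᵢ / εᵢ + δ`, and Cauchy–Schwarz in the `Pᵢ`-inner product turns this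
into `|y| < 2 √((Mᵢ/εᵢ) C Pᵢ⁻¹ Cᵀ) + η`. By hypothesis the next sector bound then holds, so
induction on `i` reaches step `K`, where `σ_K ≥ 0`: now `V → 0`, and the same Cauchy–Schwarz
bound applied to the coordinate functionals gives `x → 0`.
-/

open Matrix Filter Topology

theorem tendsto_gronwallBound_atTop {δ c d : ℝ} (hc : 0 < c) :
    Tendsto (gronwallBound δ (-c) d) atTop (𝓝 (d / c)) := by
  rw [gronwallBound_of_K_ne_0 (neg_ne_zero.2 hc.ne')]
  have hexp : Tendsto (fun x ↦ Real.exp (-c * x)) atTop (𝓝 0) :=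
    Real.tendsto_exp_atBot.comp (tendsto_id.const_mul_atTop_of_neg (neg_neg_of_pos hc))
  convert (hexp.const_mul δ).add ((hexp.sub_const 1).const_mul (d / -c)) using 2
  field_simp
  ring

theorem eventually_lt_of_hasDerivAt_le_neg_mul_add {f f' : ℝ → ℝ} {c d δ : ℝ} (hc : 0 < c)
    (hf : ∀ᶠ t in atTop, HasDerivAt f (f' t) t ∧ f' t ≤ -c * f t + d) (hδ : 0 < δ) :
    ∀ᶠ t in atTop, f t < d / c + δ := by
  obtain ⟨a, ha⟩ := eventually_atTop.1 hf
  have hbound : ∀ t, a ≤ t → f t ≤ gronwallBound (f a) (-c) d (t - a) := fun t hat ↦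
    le_gronwallBound_of_liminf_deriv_right_le
      (fun s hs ↦ (ha s hs.1).1.continuousAt.continuousWithinAt)
      (fun s hs _ hr ↦ (ha s hs.1).1.hasDerivWithinAt.liminf_right_slope_le hr) le_rfl
      (fun s hs ↦ (ha s hs.1).2) t ⟨hat, le_rfl⟩
  have hlim := (tendsto_gronwallBound_atTop (δ := f a) (d := d) hc).comp
    (tendsto_atTop_add_const_right atTop (-a) tendsto_id)
  filter_upwards [hlim.eventually (gt_mem_nhds (lt_add_of_pos_right _ hδ)),
    eventually_ge_atTop a] with t hlt hat
  exact (hbound t hat).trans_lt hlt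

theorem Matrix.PosDef.isSymm {n : Type*} {P : Matrix n n ℝ} (hP : P.PosDef) : P.IsSymm :=
  isHermitian_iff_isSymm.1 hP.isHermitian

variable {ι κ : Type*} [Fintype ι] [Fintype κ]

theorem HasDerivAt.dotProduct {u v : ℝ → ι → ℝ} {u' v' : ι → ℝ} {t : ℝ}
    (hu : HasDerivAt u u' t) (hv : HasDerivAt v v' t) :
    HasDerivAt (fun s ↦ u s ⬝ᵥ v s) (u' ⬝ᵥ v t + u t ⬝ᵥ v') t := by
  unfold _root_.dotProduct
  simp only [← Finset.sum_add_distrib]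
  exact HasDerivAt.fun_sum fun i _ ↦ (hasDerivAt_pi.1 hu i).mul (hasDerivAt_pi.1 hv i)

theorem HasDerivAt.mulVec (P : Matrix ι ι ℝ) {u : ℝ → ι → ℝ} {u' : ι → ℝ} {t : ℝ}
    (hu : HasDerivAt u u' t) : HasDerivAt (fun s ↦ P *ᵥ u s) (P *ᵥ u') t :=
  (mulVecLin P).toContinuousLinearMap.hasFDerivAt.comp_hasDerivAt t hu

theorem Matrix.IsSymm.dotProduct_mulVec_comm {P : Matrix ι ι ℝ} (hP : P.IsSymm) (a b : ι → ℝ) :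
    a ⬝ᵥ P *ᵥ b = b ⬝ᵥ P *ᵥ a := by
  rw [dotProduct_mulVec, ← mulVec_transpose, hP.eq, dotProduct_comm]

section PosDef

variable [DecidableEq ι]

theorem Matrix.PosDef.sq_dotProduct_le {P : Matrix ι ι ℝ} (hP : P.PosDef) (c z : ι → ℝ) :
    (c ⬝ᵥ z) ^ 2 ≤ (c ⬝ᵥ P⁻¹ *ᵥ c) * (z ⬝ᵥ P *ᵥ z) := by
  set w := P⁻¹ *ᵥ c
  have hw : P *ᵥ w = c := by
    rw [mulVec_mulVec, mul_nonsing_inv _ ((isUnit_iff_isUnit_det _).1 hP.isUnit), one_mulVec]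
  have hwz : w ⬝ᵥ P *ᵥ z = c ⬝ᵥ z := by
    rw [hP.isSymm.dotProduct_mulVec_comm, hw, dotProduct_comm]
  have hnonneg (s : ℝ) : 0 ≤ (c ⬝ᵥ w) * (s * s) + (-2 * (c ⬝ᵥ z)) * s + z ⬝ᵥ P *ᵥ z := by
    have := hP.posSemidef.dotProduct_mulVec_nonneg (z - s • w)
    simp only [star_trivial, mulVec_sub, mulVec_smul, sub_dotProduct, dotProduct_sub,
      smul_dotProduct, dotProduct_smul, smul_eq_mul, hw, hwz] at this
    rw [dotProduct_comm z c, dotProduct_comm w c] at this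
    linarith
  have := discrim_le_zero hnonneg
  rw [discrim] at this
  linarith

theorem eventually_abs_dotProduct_lt {α : Type*} {l : Filter α}
    {P : Matrix ι ι ℝ} (hP : P.PosDef) {x : α → ι → ℝ} {R : ℝ}
    (hV : ∀ δ > 0, ∀ᶠ t in l, x t ⬝ᵥ P *ᵥ x t < R + δ) (c : ι → ℝ) {η : ℝ} (hη : 0 < η) :
    ∀ᶠ t in l, |c ⬝ᵥ x t| < √(R * (c ⬝ᵥ P⁻¹ *ᵥ c)) + η := by
  set k := c ⬝ᵥ P⁻¹ *ᵥ c
  have hk : 0 ≤ k := by simpa using hP.inv.posSemidef.dotProduct_mulVec_nonneg c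
  filter_upwards [hV (η ^ 2 / (k + 1)) (by positivity)] with t ht
  have hkδ : k * (η ^ 2 / (k + 1)) < η ^ 2 := by
    rw [mul_div_assoc', div_lt_iff₀ (by positivity)]
    nlinarith
  have hkR : R * k ≤ √(R * k) ^ 2 := Real.sq_sqrt' ▸ le_max_left _ _
  refine abs_lt_of_sq_lt_sq ?_ (by positivity)
  calc (c ⬝ᵥ x t) ^ 2 ≤ k * (x t ⬝ᵥ P *ᵥ x t) := hP.sq_dotProduct_le c (x t)
    _ ≤ k * (R + η ^ 2 / (k + 1)) := mul_le_mul_of_nonneg_left ht.le hk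
    _ < √(R * k) ^ 2 + η ^ 2 := by linarith
    _ ≤ (√(R * k) + η) ^ 2 := by nlinarith [Real.sqrt_nonneg (R * k)]

end PosDef

structure KYPConditions (ε : ℝ) (A : Matrix ι ι ℝ) (B C : ι → ℝ) (D : ℝ) (P : Matrix ι ι ℝ)
    (L : Matrix κ ι ℝ) (J : κ → ℝ) : Prop where
  lyapunov : P * A + Aᵀ * P = -(Lᵀ * L) - (ε / 2) • P
  input : P *ᵥ B = C - Lᵀ *ᵥ J
  feedthrough : J ⬝ᵥ J = 2 * D

namespace KYPConditions

variable {ε α β D M : ℝ} {A P : Matrix ι ι ℝ} {B C : ι → ℝ} {L : Matrix κ ι ℝ} {J : κ → ℝ}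

theorem dissipation (h : KYPConditions ε A B C D P L J) (hP : P.IsSymm) (z : ι → ℝ) (v : ℝ) :
    (A *ᵥ z - v • B) ⬝ᵥ P *ᵥ z + z ⬝ᵥ P *ᵥ (A *ᵥ z - v • B)
      ≤ -(ε / 2) * (z ⬝ᵥ P *ᵥ z) - 2 * (v * (C ⬝ᵥ z) - D * v ^ 2) := by
  have hquad : (A *ᵥ z) ⬝ᵥ P *ᵥ z + z ⬝ᵥ P *ᵥ (A *ᵥ z) = z ⬝ᵥ (P * A + Aᵀ * P) *ᵥ z := by
    rw [add_mulVec, dotProduct_add, ← mulVec_mulVec, ← mulVec_mulVec, dotProduct_mulVec z Aᵀ,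
      vecMul_transpose, dotProduct_comm (A *ᵥ z), add_comm]
  have hA : (A *ᵥ z) ⬝ᵥ P *ᵥ z + z ⬝ᵥ P *ᵥ (A *ᵥ z)
      = -((L *ᵥ z) ⬝ᵥ (L *ᵥ z)) - ε / 2 * (z ⬝ᵥ P *ᵥ z) := by
    rw [hquad, h.lyapunov, sub_mulVec, neg_mulVec, ← mulVec_mulVec, dotProduct_sub,
      dotProduct_neg, dotProduct_mulVec z Lᵀ, vecMul_transpose, smul_mulVec, dotProduct_smul,
      smul_eq_mul]
  have hB : B ⬝ᵥ P *ᵥ z = C ⬝ᵥ z - (L *ᵥ z) ⬝ᵥ J := by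
    rw [hP.dotProduct_mulVec_comm, h.input, dotProduct_sub, dotProduct_comm,
      dotProduct_mulVec z Lᵀ, vecMul_transpose]
  -- complete the square in `v`
  have hsq : 0 ≤ (L *ᵥ z - v • J) ⬝ᵥ (L *ᵥ z - v • J) := dotProduct_self_star_nonneg _
  simp only [sub_dotProduct, dotProduct_sub, smul_dotProduct, dotProduct_smul, mulVec_sub,
    mulVec_smul, smul_eq_mul, h.feedthrough] at hA hsq ⊢
  rw [dotProduct_comm J] at hsq
  rw [hP.dotProduct_mulVec_comm z B, hB]
  linear_combination hA + hsq

theorem dissipation_sector (h : KYPConditions ε (A - α • vecMulVec B C) B C (1 / (β - α)) P L J)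
    (hP : P.IsSymm) (hαβ : α ≠ β) (z : ι → ℝ) (u : ℝ) :
    (A *ᵥ z - u • B) ⬝ᵥ P *ᵥ z + z ⬝ᵥ P *ᵥ (A *ᵥ z - u • B)
      ≤ -(ε / 2) * (z ⬝ᵥ P *ᵥ z)
        - 2 * (1 / (β - α) * (u - α * (C ⬝ᵥ z)) * (β * (C ⬝ᵥ z) - u)) := by
  have hshift : A *ᵥ z - u • B = (A - α • vecMulVec B C) *ᵥ z - (u - α * (C ⬝ᵥ z)) • B := by
    rw [sub_mulVec, smul_mulVec, vecMulVec_mulVec, op_smul_eq_smul, smul_smul, sub_smul]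
    abel
  have hsector : 1 / (β - α) * (u - α * (C ⬝ᵥ z)) * (β * (C ⬝ᵥ z) - u)
      = (u - α * (C ⬝ᵥ z)) * (C ⬝ᵥ z) - 1 / (β - α) * (u - α * (C ⬝ᵥ z)) ^ 2 := by
    field_simp [sub_ne_zero.2 hαβ.symm]
    ring
  rw [hshift, hsector]
  exact h.dissipation hP z _

variable {x : ℝ → ι → ℝ} {u : ℝ → ℝ}

theorem eventually_lyapunov_lt
    (h : KYPConditions ε (A - α • vecMulVec B C) B C (1 / (β - α)) P L J) (hP : P.IsSymm)
    (hαβ : α ≠ β) (hε : 0 < ε) (hx : ∀ᶠ t in atTop, HasDerivAt x (A *ᵥ x t - u t • B) t)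
    (hsec : ∀ᶠ t in atTop, -M ≤ 1 / (β - α) * (u t - α * (C ⬝ᵥ x t)) * (β * (C ⬝ᵥ x t) - u t))
    {δ : ℝ} (hδ : 0 < δ) :
    ∀ᶠ t in atTop, x t ⬝ᵥ P *ᵥ x t < 4 * M / ε + δ := by
  have hR : 2 * M / (ε / 2) = 4 * M / ε := by field_simp; ring
  rw [← hR]
  refine eventually_lt_of_hasDerivAt_le_neg_mul_add (half_pos hε)
    (f' := fun t ↦ (A *ᵥ x t - u t • B) ⬝ᵥ P *ᵥ x t + x t ⬝ᵥ P *ᵥ (A *ᵥ x t - u t • B)) ?_ hδ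
  filter_upwards [hx, hsec] with t hxt hst
  exact ⟨hxt.dotProduct (hxt.mulVec P), by linarith [h.dissipation_sector hP hαβ (x t) (u t)]⟩

variable [DecidableEq ι]

theorem eventually_abs_output_lt
    (h : KYPConditions ε (A - α • vecMulVec B C) B C (1 / (β - α)) P L J) (hP : P.PosDef)
    (hαβ : α ≠ β) (hε : 0 < ε) (hx : ∀ᶠ t in atTop, HasDerivAt x (A *ᵥ x t - u t • B) t)
    (hsec : ∀ᶠ t in atTop, -M ≤ 1 / (β - α) * (u t - α * (C ⬝ᵥ x t)) * (β * (C ⬝ᵥ x t) - u t))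
    {η : ℝ} (hη : 0 < η) :
    ∀ᶠ t in atTop, |C ⬝ᵥ x t| < 2 * √(M / ε * (C ⬝ᵥ P⁻¹ *ᵥ C)) + η := by
  have h4 : 4 * M / ε * (C ⬝ᵥ P⁻¹ *ᵥ C) = 2 ^ 2 * (M / ε * (C ⬝ᵥ P⁻¹ *ᵥ C)) := by ring
  simpa only [h4, Real.sqrt_mul (sq_nonneg 2), Real.sqrt_sq zero_le_two] using
    eventually_abs_dotProduct_lt hP
      (fun δ hδ ↦ h.eventually_lyapunov_lt hP.isSymm hαβ hε hx hsec hδ) C hη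

theorem eventually_of_output_bound
    (h : KYPConditions ε (A - α • vecMulVec B C) B C (1 / (β - α)) P L J) (hP : P.PosDef)
    (hαβ : α ≠ β) (hε : 0 < ε) (hx : ∀ᶠ t in atTop, HasDerivAt x (A *ᵥ x t - u t • B) t)
    (hsec : ∀ᶠ t in atTop, -M ≤ 1 / (β - α) * (u t - α * (C ⬝ᵥ x t)) * (β * (C ⬝ᵥ x t) - u t))
    {Q : ℝ → ℝ → Prop}
    (hQ : ∃ η > 0, ∀ t y, |y| < 2 * √(M / ε * (C ⬝ᵥ P⁻¹ *ᵥ C)) + η → Q t y) :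
    ∀ᶠ t in atTop, Q t (C ⬝ᵥ x t) := by
  obtain ⟨η, hη, hQ⟩ := hQ
  exact (h.eventually_abs_output_lt hP hαβ hε hx hsec hη).mono fun t ht ↦ hQ t _ ht

theorem tendsto_zero_of_sector
    (h : KYPConditions ε (A - α • vecMulVec B C) B C (1 / (β - α)) P L J) (hP : P.PosDef)
    (hαβ : α < β) (hε : 0 < ε) (hx : ∀ᶠ t in atTop, HasDerivAt x (A *ᵥ x t - u t • B) t)
    (hsec : ∀ᶠ t in atTop, 0 ≤ (u t - α * (C ⬝ᵥ x t)) * (β * (C ⬝ᵥ x t) - u t)) :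
    Tendsto x atTop (𝓝 0) := by
  have hsec' : ∀ᶠ t in atTop,
      -0 ≤ 1 / (β - α) * (u t - α * (C ⬝ᵥ x t)) * (β * (C ⬝ᵥ x t) - u t) :=
    hsec.mono fun t ht ↦ by
      rw [neg_zero, mul_assoc]
      exact mul_nonneg (one_div_nonneg.2 (sub_nonneg.2 hαβ.le)) ht
  refine tendsto_pi_nhds.2 fun i ↦ Metric.tendsto_nhds.2 fun η hη ↦ ?_
  filter_upwards [eventually_abs_dotProduct_lt hP
    (fun δ hδ ↦ h.eventually_lyapunov_lt hP.isSymm hαβ.ne hε hx hsec' hδ) (Pi.single i 1) hη]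
    with t ht
  simpa using ht

end KYPConditions

theorem K_step_sequential_circle_criterion_general {m p : ℕ}
    (A : Matrix (Fin m) (Fin m) ℝ) (B : Fin m → ℝ) (C : Fin m → ℝ)
    (K : ℕ) (hK : 2 ≤ K)
    (α β ε M : ℕ → ℝ)
    (hαβ : ∀ i, 1 ≤ i → i ≤ K → α i < β i)
    (hε : ∀ i, 1 ≤ i → i ≤ K → 0 < ε i)
    (P : ℕ → Matrix (Fin m) (Fin m) ℝ)
    (hP : ∀ i, 1 ≤ i → i ≤ K → (P i).PosDef)
    (L : ℕ → Matrix (Fin p) (Fin m) ℝ) (J : ℕ → Fin p → ℝ)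
    (hKYP1 : ∀ i, 1 ≤ i → i ≤ K →
        P i * (A - α i • vecMulVec B C) + (A - α i • vecMulVec B C)ᵀ * P i
          = -((L i)ᵀ * L i) - (ε i / 2) • P i)
    (hKYP2 : ∀ i, 1 ≤ i → i ≤ K → (P i).mulVec B = C - (L i)ᵀ.mulVec (J i))
    (hKYP3 : ∀ i, 1 ≤ i → i ≤ K → J i ⬝ᵥ J i = 2 / (β i - α i))
    (n : ℝ → ℝ → ℝ)
    (hfirst : ∀ t y,
      -M 1 < (1 / (β 1 - α 1)) * (n t y - α 1 * y) * (β 1 * y - n t y))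
    (hstep : ∀ i, 1 ≤ i → i ≤ K - 2 → ∃ η > (0 : ℝ), ∀ t y,
      |y| < 2 * Real.sqrt ((M i / ε i) * (C ⬝ᵥ (P i)⁻¹.mulVec C)) + η →
        -M (i + 1) < (1 / (β (i + 1) - α (i + 1))) * (n t y - α (i + 1) * y)
            * (β (i + 1) * y - n t y))
    (hlast : ∃ η > (0 : ℝ), ∀ t y,
      |y| < 2 * Real.sqrt ((M (K - 1) / ε (K - 1))
          * (C ⬝ᵥ (P (K - 1))⁻¹.mulVec C)) + η →
        0 ≤ (n t y - α K * y) * (β K * y - n t y))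
    (x : ℝ → Fin m → ℝ)
    (hx : ∀ t, 0 ≤ t → HasDerivAt x (A.mulVec (x t) - n t (C ⬝ᵥ x t) • B) t) :
    Tendsto x atTop (nhds 0) := by
  have hx' : ∀ᶠ t in atTop, HasDerivAt x (A *ᵥ x t - n t (C ⬝ᵥ x t) • B) t :=
    (eventually_ge_atTop 0).mono hx
  have kyp : ∀ i, 1 ≤ i → i ≤ K →
      KYPConditions (ε i) (A - α i • vecMulVec B C) B C (1 / (β i - α i)) (P i) (L i) (J i) :=
    fun i hi hiK ↦ ⟨hKYP1 i hi hiK, hKYP2 i hi hiK, by rw [hKYP3 i hi hiK]; ring⟩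
  have hsector : ∀ i, 1 ≤ i → i ≤ K - 1 → ∀ᶠ t in atTop,
      -M i < 1 / (β i - α i) * (n t (C ⬝ᵥ x t) - α i * (C ⬝ᵥ x t))
        * (β i * (C ⬝ᵥ x t) - n t (C ⬝ᵥ x t)) := by
    intro i hi
    induction i, hi using Nat.le_induction with
    | base => exact fun _ ↦ .of_forall fun t ↦ hfirst t _
    | succ i hi ih =>
      intro hiK
      have hi' : i ≤ K := by omega
      exact (kyp i hi hi').eventually_of_output_bound (hP i hi hi') (hαβ i hi hi').ne
        (hε i hi hi') hx' ((ih (by omega)).mono fun _ ↦ le_of_lt) (hstep i hi (by omega))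
  have hK₀ : 1 ≤ K := by omega
  have hK₁ : 1 ≤ K - 1 := by omega
  have hK₂ : K - 1 ≤ K := Nat.sub_le K 1
  exact (kyp K hK₀ le_rfl).tendsto_zero_of_sector (hP K hK₀ le_rfl) (hαβ K hK₀ le_rfl)
    (hε K hK₀ le_rfl) hx'
    ((kyp (K - 1) hK₁ hK₂).eventually_of_output_bound (hP (K - 1) hK₁ hK₂)
      (hαβ (K - 1) hK₁ hK₂).ne (hε (K - 1) hK₁ hK₂) hx'
      ((hsector (K - 1) hK₁ le_rfl).mono fun _ ↦ le_of_lt) hlast)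

/-- Theorem 3 (K-step sequential circle criterion), state-space form for a
strictly proper linear block: at each step the weak circle criterion shrinks
the output bound, tightening the sector in which the nonlinearity is explored,
until a true sector condition holds on the final region and the standard
Circle Criterion yields global asymptotic stability. -/
theorem K_step_sequential_circle_criterion {m p : ℕ}
    (A : Matrix (Fin m) (Fin m) ℝ) (B : Fin m → ℝ) (C : Fin m → ℝ)
    (K : ℕ) (hK : 2 ≤ K)
    (α β ε M : ℕ → ℝ)
    (hαβ : ∀ i, 1 ≤ i → i ≤ K → α i < β i)
    (hε : ∀ i, 1 ≤ i → i ≤ K → 0 < ε i)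
    (hM : ∀ i, 1 ≤ i → i ≤ K - 1 → 0 < M i)
    (P : ℕ → Matrix (Fin m) (Fin m) ℝ)
    (hP : ∀ i, 1 ≤ i → i ≤ K → (P i).PosDef)
    (L : ℕ → Matrix (Fin p) (Fin m) ℝ) (J : ℕ → Fin p → ℝ)
    (hKYP1 : ∀ i, 1 ≤ i → i ≤ K →
        P i * (A - α i • vecMulVec B C) + (A - α i • vecMulVec B C)ᵀ * P i
          = -((L i)ᵀ * L i) - (ε i / 2) • P i)
    (hKYP2 : ∀ i, 1 ≤ i → i ≤ K → (P i).mulVec B = C - (L i)ᵀ.mulVec (J i))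
    (hKYP3 : ∀ i, 1 ≤ i → i ≤ K → J i ⬝ᵥ J i = 2 / (β i - α i))
    (n : ℝ → ℝ → ℝ) (hn : Continuous fun q : ℝ × ℝ => n q.1 q.2)
    (hfirst : ∀ t y,
      -M 1 < (1 / (β 1 - α 1)) * (n t y - α 1 * y) * (β 1 * y - n t y))
    (hstep : ∀ i, 1 ≤ i → i ≤ K - 2 → ∃ η > (0 : ℝ), ∀ t y,
      |y| < 2 * Real.sqrt ((M i / ε i) * (C ⬝ᵥ (P i)⁻¹.mulVec C)) + η →
        -M (i + 1) < (1 / (β (i + 1) - α (i + 1))) * (n t y - α (i + 1) * y)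
            * (β (i + 1) * y - n t y))
    (hlast : ∃ η > (0 : ℝ), ∀ t y,
      |y| < 2 * Real.sqrt ((M (K - 1) / ε (K - 1))
          * (C ⬝ᵥ (P (K - 1))⁻¹.mulVec C)) + η →
        0 ≤ (n t y - α K * y) * (β K * y - n t y))
    (x : ℝ → Fin m → ℝ)
    (hx : ∀ t, 0 ≤ t → HasDerivAt x (A.mulVec (x t) - n t (C ⬝ᵥ x t) • B) t) :
    Tendsto x atTop (nhds 0) :=
  K_step_sequential_circle_criterion_general A B C K hK α β ε M hαβ hε P hP L J hKYP1 hKYP2 hKYP3 n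
    hfirst hstep hlast x hx
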